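/- arXiv:1808.05426 — 2 statements merged into one kernel-verified Lean document; each statement's English description precedes it below -/
import Mathlib

section
/- Let α > 0 and f_α be the Huber function on ℝ. Then f_α is not averaged: taking x = −2α and y = −α, one has |f_α(x) − f_α(y)| = |x − y| = α while (x − f_α(x)) − (y − f_α(y)) ≠ 0, so no β ∈ (0,1) satisfies |f_α(x)−f_α(y)|² + ((1−β)/β)|(x−f_α(x))−(y−f_α(y))|² ≤ |x−y|². -/
/-! A β-averaged map with `‖T x - T y‖ = ‖x - y‖` must have `x - T x = y - T y`, since the
residual term enters the averagedness inequality with the positive weight `(1 - β) / β`.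
The Huber function is affine with slope `-1` on `(-∞, -α]`, so it is an isometry between
`-2α` and `-α`, while the residual `x - f x` has slope `2` there. -/

noncomputable def huber (α x : ℝ) : ℝ :=
  if |x| ≤ α then x ^ 2 / (2 * α) else |x| - α / 2

section Huber

variable {α : ℝ}

theorem huber_neg_self (hα : 0 < α) : huber α (-α) = α / 2 := by
  rw [huber, abs_neg, abs_of_pos hα, if_pos le_rfl]
  field_simp

theorem huber_neg_two_mul (hα : 0 < α) : huber α (-2 * α) = 3 * α / 2 := by
  have habs : |-2 * α| = 2 * α := by rw [abs_of_neg (by linarith)]; ring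
  rw [huber, habs, if_neg (by linarith)]
  ring

end Huber

theorem not_averaged_of_norm_eq_of_residual_ne {E : Type*} [NormedAddCommGroup E]
    {T : E → E} {x y : E} (hT : ‖T x - T y‖ = ‖x - y‖) (hres : x - T x - (y - T y) ≠ 0)
    {β : ℝ} (hβ₀ : 0 < β) (hβ₁ : β < 1) :
    ¬ ‖T x - T y‖ ^ 2 + (1 - β) / β * ‖x - T x - (y - T y)‖ ^ 2 ≤ ‖x - y‖ ^ 2 := by
  have hweight : 0 < (1 - β) / β := div_pos (by linarith) hβ₀
  have hres_pos : 0 < ‖x - T x - (y - T y)‖ ^ 2 := by positivity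
  rw [hT, not_le]
  linarith [mul_pos hweight hres_pos]

/-- The Huber function is not averaged: for `x = −2α`, `y = −α` one has
`|f x − f y| = |x − y| = α` and `(x − f x) − (y − f y) ≠ 0`, so no
`β ∈ (0,1)` satisfies the averagedness inequality. -/
theorem stmt_10 (α : ℝ) (hα : 0 < α)
    (f : ℝ → ℝ)
    (hf : ∀ x : ℝ, f x = if |x| ≤ α then x ^ 2 / (2 * α) else |x| - α / 2) :
    |f (-2 * α) - f (-α)| = α ∧ |(-2 * α : ℝ) - (-α)| = α ∧
      ((-2 * α) - f (-2 * α)) - ((-α) - f (-α)) ≠ 0 ∧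
      ∀ β : ℝ, 0 < β → β < 1 →
        ¬ (|f (-2 * α) - f (-α)| ^ 2 +
            ((1 - β) / β) * |((-2 * α) - f (-2 * α)) - ((-α) - f (-α))| ^ 2 ≤
              |(-2 * α : ℝ) - (-α)| ^ 2) := by
  obtain rfl : f = huber α := funext hf
  have hT : |huber α (-2 * α) - huber α (-α)| = α := by
    rw [huber_neg_two_mul hα, huber_neg_self hα, abs_of_pos (by linarith)]; ring
  have hxy : |-2 * α - -α| = α := by rw [abs_of_neg (by linarith)]; ring
  have hres : -2 * α - huber α (-2 * α) - (-α - huber α (-α)) ≠ 0 := by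
    rw [huber_neg_two_mul hα, huber_neg_self hα]; linarith
  refine ⟨hT, hxy, hres, fun β hβ₀ hβ₁ => ?_⟩
  simpa only [Real.norm_eq_abs] using not_averaged_of_norm_eq_of_residual_ne
    (by simpa only [Real.norm_eq_abs] using hT.trans hxy.symm) hres hβ₀ hβ₁
end

section
/- Let 0 < ρ < 1, and for α ∈ [0, 2π) let C_α be the closed ball in ℝ² of radius 1 centered at ρ·(cos α, sin α). Then ⋂_{α ∈ [0,2π)} C_α equals the closed ball of radius 1 − ρ centered at the origin. -/
/-!
For a unit vector `u`, the triangle inequality gives `dist x (ρ • u) ≤ ‖x‖ + ρ`, with equality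
for `u = -‖x‖⁻¹ • x` (any `u` if `x = 0`). Hence `x` lies in every ball `closedBall (ρ • u) 1`
exactly when `‖x‖ + ρ ≤ 1`. The angles in `[0, 2π)` already give every unit vector of the plane.
-/

open Real Set Metric Function

noncomputable def unitVec (α : ℝ) : EuclideanSpace ℝ (Fin 2) :=
  (EuclideanSpace.equiv (Fin 2) ℝ).symm ![cos α, sin α]

lemma unitVec_eq_repr_exp (α : ℝ) :
    unitVec α = Complex.orthonormalBasisOneI.repr (Complex.exp (α * Complex.I)) := by
  ext i; fin_cases i <;> simp [unitVec, Complex.exp_ofReal_mul_I_re, Complex.exp_ofReal_mul_I_im]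

lemma range_unitVec : range unitVec = sphere 0 1 := by
  have range_exp : range (fun α : ℝ => Complex.exp (α * Complex.I)) = sphere 0 1 := by
    ext z; simp [Complex.norm_eq_one_iff, eq_comm]
  rw [funext unitVec_eq_repr_exp, range_comp', range_exp, LinearIsometryEquiv.image_sphere, map_zero]

lemma unitVec_periodic : Periodic unitVec (2 * π) := by
  intro α; simp [unitVec]

lemma image_unitVec_Ico : unitVec '' Ico 0 (2 * π) = sphere 0 1 := by
  rw [← range_unitVec]
  refine (image_subset_range _ _).antisymm (range_subset_iff.2 fun α => ?_)
  obtain ⟨β, hβ, h⟩ := unitVec_periodic.exists_mem_Ico₀ two_pi_pos α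
  exact ⟨β, hβ, h.symm⟩

lemma exists_norm_eq_one_dist_smul_eq {E : Type*} [NormedAddCommGroup E] [NormedSpace ℝ E]
    [Nontrivial E] {ρ : ℝ} (hρ : 0 ≤ ρ) (x : E) : ∃ u : E, ‖u‖ = 1 ∧ dist x (ρ • u) = ‖x‖ + ρ := by
  rcases eq_or_ne x 0 with rfl | hx
  · obtain ⟨u, hu⟩ := exists_norm_eq E zero_le_one
    exact ⟨u, hu, by simp [norm_smul, hu, abs_of_nonneg hρ]⟩
  · have hx' : 0 < ‖x‖ := norm_pos_iff.2 hx
    refine ⟨-‖x‖⁻¹ • x, by simp [norm_smul, hx'.ne'], ?_⟩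
    have : x - ρ • -‖x‖⁻¹ • x = (1 + ρ * ‖x‖⁻¹) • x := by module
    rw [dist_eq_norm, this, norm_smul, Real.norm_of_nonneg (by positivity)]
    field_simp

theorem iInter_closedBall_smul_sphere {E : Type*} [NormedAddCommGroup E] [NormedSpace ℝ E]
    [Nontrivial E] {ρ : ℝ} (hρ : 0 ≤ ρ) (R : ℝ) :
    ⋂ u ∈ sphere (0 : E) 1, closedBall (ρ • u) R = closedBall 0 (R - ρ) := by
  ext x
  simp only [mem_iInter, mem_closedBall, dist_zero_right, mem_sphere_zero_iff_norm]
  constructor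
  · intro h
    obtain ⟨u, hu, hdist⟩ := exists_norm_eq_one_dist_smul_eq hρ x
    linarith [h u hu]
  · intro hx u hu
    calc dist x (ρ • u) ≤ ‖x‖ + ‖ρ • u‖ := dist_le_norm_add_norm _ _
      _ = ‖x‖ + ρ := by rw [norm_smul, hu, Real.norm_of_nonneg hρ, mul_one]
      _ ≤ R := by linarith

theorem stmt_13_general (ρ : ℝ) (hρ0 : 0 < ρ) :
    ⋂ α ∈ Set.Ico (0 : ℝ) (2 * π),
        Metric.closedBall
          (ρ • (EuclideanSpace.equiv (Fin 2) ℝ).symm ![Real.cos α, Real.sin α]) 1 =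
      Metric.closedBall (0 : EuclideanSpace ℝ (Fin 2)) (1 - ρ) := by
  rw [← iInter_closedBall_smul_sphere hρ0.le, ← image_unitVec_Ico, biInter_image]
  rfl

/-- The intersection of the closed unit disks centered at `ρ(cos α, sin α)`,
`α ∈ [0, 2π)`, is the closed disk of radius `1 − ρ` centered at the origin. -/
theorem stmt_13 (ρ : ℝ) (hρ0 : 0 < ρ) (hρ1 : ρ < 1) :
    ⋂ α ∈ Set.Ico (0 : ℝ) (2 * π),
        Metric.closedBall
          (ρ • (EuclideanSpace.equiv (Fin 2) ℝ).symm ![Real.cos α, Real.sin α]) 1 =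
      Metric.closedBall (0 : EuclideanSpace ℝ (Fin 2)) (1 - ρ) :=
  stmt_13_general ρ hρ0
end
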